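/- Let g, h : ℝ^m → ℝ be strongly convex with modulus ρ > 0, with g continuously differentiable, φ := g − h, and inf φ > −∞. Let {x_k}, {y_k}, {λ_k} be a BDCA sequence (with parameter α > 0) converging to a limit point x*. Assume ∇g is Lipschitz continuous on a neighborhood of x*, and that φ satisfies the strong Kurdyka–Łojasiewicz inequality at x* with desingularizing function ψ(t) = M t^{1−θ} for some M > 0 and θ ∈ (0, 1/2]; that is, there exist η > 0 and a neighborhood U of x* such that M(1−θ)(φ(x) − φ(x*))^{−θ} · dist(0, ∇g(x) − ∂h(x)) ≥ 1 for all x ∈ U with φ(x*) < φ(x) < φ(x*) + η. Then {x_k} converges linearly to x*: there exist c > 0 and q ∈ (0, 1) such that ‖x_k − x*‖ ≤ c q^k for all k. -/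

import Mathlib

open scoped RealInnerProductSpace
open Filter Topology

/-- The convex subdifferential of `f` at `x`. -/
def subdiff {m : ℕ} (f : EuclideanSpace ℝ (Fin m) → ℝ) (x : EuclideanSpace ℝ (Fin m)) :
    Set (EuclideanSpace ℝ (Fin m)) :=
  {u | ∀ z, f x + ⟪u, z - x⟫ ≤ f z}

lemma strong_grad {m : ℕ} (g : EuclideanSpace ℝ (Fin m) → ℝ) (ρ : ℝ)
    (hg : ConvexOn ℝ Set.univ fun z => g z - ρ / 2 * ‖z‖ ^ 2)
    (hg1 : ContDiff ℝ 1 g) (x y : EuclideanSpace ℝ (Fin m)) :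
    g x + ⟪gradient g x, y - x⟫ + ρ / 2 * ‖y - x‖ ^ 2 ≤ g y := by
  set d := y - x with hd
  -- curve c t = x + t • d
  set c : ℝ → EuclideanSpace ℝ (Fin m) := fun t => x + t • d with hc
  have hcd : ∀ t, HasDerivAt c d t := by
    intro t
    simpa [hc] using ((hasDerivAt_id t).smul_const d).const_add x
  set q : ℝ → ℝ := fun t => g (c t) - ρ / 2 * ‖c t‖ ^ 2 with hq
  have hgrad : HasGradientAt g (gradient g x) x :=
    (hg1.differentiable one_ne_zero x).hasGradientAt
  have hfd : HasFDerivAt g (InnerProductSpace.toDual ℝ _ (gradient g x)) x :=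
    hasGradientAt_iff_hasFDerivAt.mp hgrad
  have hc0 : c 0 = x := by simp [hc]
  have hc1 : c 1 = y := by simp [hc, hd]
  have hderiv : HasDerivAt q (⟪gradient g x, d⟫ - ρ / 2 * (⟪d, x⟫ + ⟪x, d⟫)) 0 := by
    have h1 : HasDerivAt (fun t => g (c t)) (⟪gradient g x, d⟫) 0 := by
      have hfd' : HasFDerivAt g (InnerProductSpace.toDual ℝ _ (gradient g x)) (c 0) := by
        rw [hc0]; exact hfd
      have := hfd'.comp_hasDerivAt 0 (hcd 0)
      exact this
    have h2 : HasDerivAt (fun t => (⟪c t, c t⟫ : ℝ)) (⟪d, x⟫ + ⟪x, d⟫) 0 := by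
      have := HasDerivAt.inner ℝ (hcd 0) (hcd 0)
      rw [hc0] at this
      rw [add_comm]
      exact this
    have h2' : HasDerivAt (fun t => ρ / 2 * ‖c t‖ ^ 2) (ρ / 2 * (⟪d, x⟫ + ⟪x, d⟫)) 0 := by
      have := h2.const_mul (ρ / 2)
      simp only [← real_inner_self_eq_norm_sq] at *
      exact this
    exact h1.sub h2'
  -- q is convex
  have hqc : ConvexOn ℝ Set.univ q := by
    have := hg.comp_affineMap (AffineMap.lineMap x y)
    have heq : (fun z => g z - ρ / 2 * ‖z‖ ^ 2) ∘ (AffineMap.lineMap x y) = q := by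
      funext t
      simp only [Function.comp_apply, AffineMap.lineMap_apply_module, hq, hc, hd]
      have he : (1 - t) • x + t • y = x + t • (y - x) := by
        rw [smul_sub, sub_smul]; module
      rw [he]
    rw [heq] at this
    simpa using this
  have hslope : (⟪gradient g x, d⟫ - ρ / 2 * (⟪d, x⟫ + ⟪x, d⟫)) ≤ q 1 - q 0 := by
    have := hqc.le_slope_of_hasDerivAt (Set.mem_univ 0) (Set.mem_univ 1) one_pos hderiv
    simpa [slope_def_field] using this
  have hy2 : ‖y‖ ^ 2 = ‖x‖ ^ 2 + (⟪d, x⟫ + ⟪x, d⟫) + ‖d‖ ^ 2 := by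
    have : y = x + d := by simp [hd]
    rw [this]
    simp only [← real_inner_self_eq_norm_sq]
    rw [inner_add_add_self]
    rw [real_inner_comm d x]
    ring
  simp only [hq, hc0, hc1] at hslope
  rw [hy2] at hslope
  linarith

/-- Extend a geometric tail bound to all indices. -/
lemma extend_tail (u : ℕ → ℝ) (hu : ∀ k, 0 ≤ u k) (q : ℝ) (hq : q ∈ Set.Ioo (0:ℝ) 1)
    (k₀ : ℕ) (c : ℝ) (hc : 0 < c) (H : ∀ k ≥ k₀, u k ≤ c * q ^ k) :
    ∃ c' > (0:ℝ), ∀ k, u k ≤ c' * q ^ k := by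
  have hsum : (0:ℝ) ≤ ∑ j ∈ Finset.range k₀, u j / q ^ j := by
    apply Finset.sum_nonneg; intro j _
    exact div_nonneg (hu j) (pow_pos hq.1 j).le
  refine ⟨c + ∑ j ∈ Finset.range k₀, u j / q ^ j, by linarith, fun k => ?_⟩
  by_cases hk : k₀ ≤ k
  · have := H k hk
    have hqk : (0:ℝ) < q ^ k := pow_pos hq.1 k
    nlinarith
  · push_neg at hk
    have hmem : k ∈ Finset.range k₀ := Finset.mem_range.mpr hk
    have hle : u k / q ^ k ≤ ∑ j ∈ Finset.range k₀, u j / q ^ j := by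
      apply Finset.single_le_sum (f := fun j => u j / q ^ j)
        (fun j _ => div_nonneg (hu j) (pow_pos hq.1 j).le) hmem
    have hqk : (0:ℝ) < q ^ k := pow_pos hq.1 k
    have : u k ≤ (∑ j ∈ Finset.range k₀, u j / q ^ j) * q ^ k := by
      rw [div_le_iff₀ hqk] at hle
      linarith
    nlinarith

set_option maxHeartbeats 1000000 in
theorem stmt16 {m : ℕ} (g h : EuclideanSpace ℝ (Fin m) → ℝ) (ρ : ℝ) (hρ : 0 < ρ)
    (hg : ConvexOn ℝ Set.univ fun z => g z - ρ / 2 * ‖z‖ ^ 2)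
    (hh : ConvexOn ℝ Set.univ fun z => h z - ρ / 2 * ‖z‖ ^ 2)
    (hg1 : ContDiff ℝ 1 g)
    (φ : EuclideanSpace ℝ (Fin m) → ℝ) (hφ : φ = fun z => g z - h z)
    (hbdd : BddBelow (Set.range φ))
    (α : ℝ) (hα : 0 < α)
    (x y : ℕ → EuclideanSpace ℝ (Fin m)) (lam : ℕ → ℝ)
    (hlam : ∀ k, 0 ≤ lam k)
    (hsub : ∀ k, gradient g (y k) ∈ subdiff h (x k))
    (hdesc : ∀ k, φ (y k + lam k • (y k - x k)) ≤ φ (y k) - α * lam k ^ 2 * ‖y k - x k‖ ^ 2)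
    (hnext : ∀ k, x (k + 1) = y k + lam k • (y k - x k))
    (xs : EuclideanSpace ℝ (Fin m))
    (hconv : Tendsto x atTop (𝓝 xs))
    -- ∇g is Lipschitz continuous on a neighborhood of x*
    (hLip : ∃ L : NNReal, ∃ U ∈ 𝓝 xs, LipschitzOnWith L (fun z => gradient g z) U)
    (M θ : ℝ) (hM : 0 < M) (hθ : θ ∈ Set.Ioc (0 : ℝ) (1 / 2))
    -- strong Kurdyka–Łojasiewicz inequality at x* with ψ(t) = M t^(1-θ)
    (hKL : ∃ η > (0 : ℝ), ∃ U ∈ 𝓝 xs,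
      ∀ z ∈ U, φ xs < φ z → φ z < φ xs + η →
        1 ≤ M * (1 - θ) * (φ z - φ xs) ^ (-θ) *
          Metric.infDist 0 ((fun u => gradient g z - u) '' subdiff h z)) :
    ∃ c > (0 : ℝ), ∃ q ∈ Set.Ioo (0 : ℝ) 1, ∀ k : ℕ, ‖x k - xs‖ ≤ c * q ^ k := by
  -- continuity of φ
  have hcontφ : Continuous φ := by
    have hhc : Continuous h := by
      have h1 : Continuous fun z : EuclideanSpace ℝ (Fin m) => h z - ρ / 2 * ‖z‖ ^ 2 := by
        rw [← continuousOn_univ]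
        exact ConvexOn.continuousOn isOpen_univ hh
      have h2 : Continuous fun z : EuclideanSpace ℝ (Fin m) => ρ / 2 * ‖z‖ ^ 2 := by
        continuity
      have := h1.add h2
      convert this using 1; funext z; simp
    rw [hφ]
    exact (hg1.continuous).sub hhc
  set d : ℕ → EuclideanSpace ℝ (Fin m) := fun k => y k - x k with hdd
  set e : ℕ → ℝ := fun k => φ (x k) - φ xs with hee
  -- key descent inequality
  have hkey : ∀ k, φ (x (k+1)) + ρ / 2 * ‖d k‖ ^ 2 + α * lam k ^ 2 * ‖d k‖ ^ 2 ≤ φ (x k) := by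
    intro k
    have h1 : φ (x (k+1)) ≤ φ (y k) - α * lam k ^ 2 * ‖d k‖ ^ 2 := by
      rw [hnext k]; exact hdesc k
    have h2 : φ (y k) + ρ / 2 * ‖d k‖ ^ 2 ≤ φ (x k) := by
      have hgineq := strong_grad g ρ hg hg1 (y k) (x k)
      have hhineq := hsub k (y k)
      have hn : ‖x k - y k‖ = ‖d k‖ := by
        rw [hdd]; simp [← norm_neg (x k - y k)]
      have hi : ⟪gradient g (y k), x k - y k⟫ = - ⟪gradient g (y k), y k - x k⟫ := by
        rw [← inner_neg_right]; congr 1; abel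
      rw [hφ]
      rw [hn, hi] at hgineq
      simp only [hφ]
      have : y k - x k = d k := rfl
      rw [this] at hhineq
      linarith
    linarith
  have hmono : ∀ k, φ (x (k+1)) ≤ φ (x k) := by
    intro k
    have := hkey k
    have h1 : 0 ≤ ρ / 2 * ‖d k‖ ^ 2 := by positivity
    have h2 : 0 ≤ α * lam k ^ 2 * ‖d k‖ ^ 2 := by positivity
    linarith
  have hanti : Antitone fun k => φ (x k) := antitone_nat_of_succ_le hmono
  have hφconv : Tendsto (fun k => φ (x k)) atTop (𝓝 (φ xs)) :=
    (hcontφ.tendsto xs).comp hconv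
  have hlb : ∀ k, φ xs ≤ φ (x k) := fun k => hanti.le_of_tendsto hφconv k
  have he0 : ∀ k, 0 ≤ e k := fun k => by simp [hee]; linarith [hlb k]
  have heanti : Antitone e := fun i j hij => sub_le_sub_right (hanti hij) _
  have hetend : Tendsto e atTop (𝓝 0) := by
    have := hφconv.sub_const (φ xs)
    simpa [hee] using this
  have hd2 : ∀ k, ρ / 2 * ‖d k‖ ^ 2 ≤ e k - e (k+1) := by
    intro k
    have := hkey k
    have h2 : 0 ≤ α * lam k ^ 2 * ‖d k‖ ^ 2 := by positivity
    simp only [hee]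
    linarith
  have hdtend : Tendsto (fun k => d k) atTop (𝓝 0) := by
    have hn2 : Tendsto (fun k => ‖d k‖ ^ 2) atTop (𝓝 0) := by
      have hub : Tendsto (fun k => (2/ρ) * (e k - e (k+1))) atTop (𝓝 0) := by
        have h1 : Tendsto (fun k => e (k+1)) atTop (𝓝 0) :=
          hetend.comp (tendsto_add_atTop_nat 1)
        have := (hetend.sub h1).const_mul (2/ρ)
        simpa using this
      refine squeeze_zero (fun k => by positivity) (fun k => ?_) hub
      have := hd2 k
      have hρ' : 0 < 2/ρ := by positivity
      calc ‖d k‖ ^ 2 = (2/ρ) * (ρ/2 * ‖d k‖ ^ 2) := by field_simp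
        _ ≤ (2/ρ) * (e k - e (k+1)) := by nlinarith
    have hn : Tendsto (fun k => ‖d k‖) atTop (𝓝 0) := by
      have := hn2.sqrt
      simp only [Real.sqrt_zero] at this
      convert this using 2 with k
      rw [Real.sqrt_sq_eq_abs, abs_norm]
    exact tendsto_zero_iff_norm_tendsto_zero.mpr hn
  have hytend : Tendsto y atTop (𝓝 xs) := by
    have : Tendsto (fun k => x k + d k) atTop (𝓝 (xs + 0)) := hconv.add hdtend
    simp only [add_zero] at this
    convert this using 2 with k
    simp [hdd]
  -- neighborhoods
  obtain ⟨L, UL, hUL, hLipL⟩ := hLip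
  obtain ⟨η, hη, UK, hUK, hKLi⟩ := hKL
  -- pick k₀
  have hev : ∀ᶠ k in atTop, x k ∈ UL ∧ x k ∈ UK ∧ y k ∈ UL ∧ e k < η := by
    have h1 := hconv.eventually_mem hUL
    have h2 := hconv.eventually_mem hUK
    have h3 := hytend.eventually_mem hUL
    have h4 : ∀ᶠ k in atTop, e k < η := hetend.eventually_lt_const hη
    filter_upwards [h1, h2, h3, h4] with k a b c dd using ⟨a, b, c, dd⟩
  obtain ⟨k₀, hk₀⟩ := eventually_atTop.mp hev
  by_cases hcase : ∃ k ≥ k₀, e k ≤ 0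
  · -- Case A: φ(x k) hits φ(xs); sequence becomes constant
    obtain ⟨k₁, hk₁, hek₁⟩ := hcase
    have hzero : ∀ k ≥ k₁, e k = 0 := fun k hk =>
      le_antisymm (le_trans (heanti hk) hek₁) (he0 k)
    have hconst : ∀ k ≥ k₁, x k = x k₁ := by
      intro k hk
      induction k, hk using Nat.le_induction with
      | base => rfl
      | succ n hn ih =>
        have hdk : d n = 0 := by
          have h1 := hd2 n
          rw [hzero n hn, hzero (n+1) (by omega)] at h1
          have h2 : ‖d n‖ ^ 2 ≤ 0 := by nlinarith
          have h3 : ‖d n‖ = 0 := by nlinarith [sq_nonneg ‖d n‖, norm_nonneg (d n)]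
          exact norm_eq_zero.mp h3
        have hyx : y n = x n := by
          have h4 : y n - x n = 0 := hdk
          exact sub_eq_zero.mp h4
        have h5 : x (n+1) = x n := by
          rw [hnext n, hyx, sub_self, smul_zero, add_zero]
        rw [h5, ih]
    have hxk₁ : x k₁ = xs := by
      have : Tendsto (fun _ : ℕ => x k₁) atTop (𝓝 xs) := by
        apply hconv.congr'
        filter_upwards [eventually_ge_atTop k₁] with k hk
        exact (hconst k hk)
      exact tendsto_const_nhds_iff.mp this
    have htail : ∀ k ≥ k₁, ‖x k - xs‖ ≤ 1 * (1/2 : ℝ) ^ k := by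
      intro k hk
      rw [hconst k hk, hxk₁, sub_self, norm_zero]
      positivity
    obtain ⟨c', hc', hall⟩ := extend_tail (fun k => ‖x k - xs‖) (fun k => norm_nonneg _)
      (1/2) ⟨by norm_num, by norm_num⟩ k₁ 1 one_pos htail
    exact ⟨c', hc', 1/2, ⟨by norm_num, by norm_num⟩, hall⟩
  · -- Case B: e k > 0 for all k ≥ k₀
    push_neg at hcase
    have hpos : ∀ k ≥ k₀, 0 < e k := hcase
    have hθ1 : 0 < 1 - θ := by have := hθ.2; linarith
    set C : ℝ := M * (1 - θ) * L with hCdef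
    -- KL-based bound on e k ^ θ
    have hkl : ∀ k ≥ k₀, (e k) ^ θ ≤ C * ‖d k‖ := by
      intro k hk
      obtain ⟨hxUL, hxUK, hyUL, heη⟩ := hk₀ k hk
      have hek := hpos k hk
      have hek' : φ xs < φ (x k) := by
        have : e k = φ (x k) - φ xs := rfl
        linarith [this ▸ hek]
      have hek'' : φ (x k) < φ xs + η := by
        have : e k = φ (x k) - φ xs := rfl
        linarith [this ▸ heη]
      have hKL' := hKLi (x k) hxUK hek' hek''
      have hmem : gradient g (x k) - gradient g (y k) ∈
          (fun u => gradient g (x k) - u) '' subdiff h (x k) :=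
        ⟨gradient g (y k), hsub k, rfl⟩
      have hinf : Metric.infDist 0 ((fun u => gradient g (x k) - u) '' subdiff h (x k))
          ≤ (L : ℝ) * ‖d k‖ := by
        refine le_trans (Metric.infDist_le_dist_of_mem hmem) ?_
        rw [dist_zero_left]
        calc ‖gradient g (x k) - gradient g (y k)‖
            = dist (gradient g (x k)) (gradient g (y k)) := (dist_eq_norm _ _).symm
          _ ≤ (L : ℝ) * dist (x k) (y k) := hLipL.dist_le_mul _ hxUL _ hyUL
          _ = (L : ℝ) * ‖d k‖ := by
              rw [dist_eq_norm, ← norm_neg]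
              congr 2
              simp [hdd]
      have hφe : φ (x k) - φ xs = e k := rfl
      rw [hφe] at hKL'
      have hrpow_pos : (0:ℝ) < (e k) ^ θ := Real.rpow_pos_of_pos hek θ
      have hrpow_neg_pos : (0:ℝ) < (e k) ^ (-θ) := Real.rpow_pos_of_pos hek (-θ)
      have hrw : (e k) ^ θ * (e k) ^ (-θ) = 1 := by
        rw [← Real.rpow_add hek]; simp
      have hstep1 : (1:ℝ) ≤ M * (1 - θ) * (e k) ^ (-θ) * ((L : ℝ) * ‖d k‖) := by
        refine le_trans hKL' ?_
        have hco : (0:ℝ) ≤ M * (1 - θ) * (e k) ^ (-θ) := by positivity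
        exact mul_le_mul_of_nonneg_left hinf hco
      calc (e k) ^ θ = (e k) ^ θ * 1 := (mul_one _).symm
        _ ≤ (e k) ^ θ * (M * (1 - θ) * (e k) ^ (-θ) * ((L : ℝ) * ‖d k‖)) :=
            mul_le_mul_of_nonneg_left hstep1 hrpow_pos.le
        _ = M * (1 - θ) * (L : ℝ) * ‖d k‖ * ((e k) ^ θ * (e k) ^ (-θ)) := by ring
        _ = C * ‖d k‖ := by rw [hrw, hCdef]; ring
    have hE : 0 < e k₀ := hpos k₀ le_rfl
    have hCpos : 0 < C := by
      have h1 := hkl k₀ le_rfl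
      have h2 : 0 < (e k₀) ^ θ := Real.rpow_pos_of_pos hE θ
      nlinarith [norm_nonneg (d k₀)]
    set K : ℝ := (2/ρ) * C^2 * (e k₀) ^ (1 - 2*θ) with hKdef
    have hEp : (0:ℝ) < (e k₀) ^ (1 - 2*θ) := Real.rpow_pos_of_pos hE _
    have hKpos : 0 < K := by positivity
    -- e decays geometrically
    have hstep : ∀ k ≥ k₀, e k ≤ K * (e k - e (k+1)) := by
      intro k hk
      have hek := hpos k hk
      have h1 := hkl k hk
      have h2 : ((e k) ^ θ)^2 ≤ C^2 * ‖d k‖^2 := by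
        have := pow_le_pow_left₀ (Real.rpow_nonneg hek.le θ) h1 2
        calc ((e k) ^ θ)^2 ≤ (C * ‖d k‖)^2 := this
          _ = C^2 * ‖d k‖^2 := by ring
      have h3 : ‖d k‖^2 ≤ (2/ρ) * (e k - e (k+1)) := by
        have h3' := hd2 k
        have hρ' : (0:ℝ) < 2/ρ := by positivity
        have h3'' := mul_le_mul_of_nonneg_left h3' hρ'.le
        have heq2 : 2/ρ * (ρ/2 * ‖d k‖^2) = ‖d k‖^2 := by field_simp
        linarith
      have h5 : ((e k) ^ θ)^2 = (e k) ^ (θ*2) := by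
        rw [← Real.rpow_natCast ((e k) ^ θ) 2, ← Real.rpow_mul hek.le]
        norm_num
      have h6 : (e k) ^ (1 - 2*θ) ≤ (e k₀) ^ (1 - 2*θ) :=
        Real.rpow_le_rpow hek.le (heanti hk) (by linarith [hθ.2])
      have h4 : e k ≤ (e k₀) ^ (1 - 2*θ) * ((e k) ^ θ)^2 := by
        rw [h5]
        calc e k = (e k) ^ (θ*2) * (e k) ^ (1 - 2*θ) := by
              rw [← Real.rpow_add hek, show θ*2 + (1 - 2*θ) = 1 by ring, Real.rpow_one]
          _ ≤ (e k) ^ (θ*2) * (e k₀) ^ (1 - 2*θ) :=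
              mul_le_mul_of_nonneg_left h6 (Real.rpow_nonneg hek.le _)
          _ = (e k₀) ^ (1 - 2*θ) * (e k) ^ (θ*2) := by ring
      calc e k ≤ (e k₀) ^ (1 - 2*θ) * ((e k) ^ θ)^2 := h4
        _ ≤ (e k₀) ^ (1 - 2*θ) * (C^2 * ‖d k‖^2) := mul_le_mul_of_nonneg_left h2 hEp.le
        _ ≤ (e k₀) ^ (1 - 2*θ) * (C^2 * ((2/ρ) * (e k - e (k+1)))) := by
            have hc2 : (0:ℝ) ≤ C^2 := sq_nonneg C
            have := mul_le_mul_of_nonneg_left h3 hc2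
            exact mul_le_mul_of_nonneg_left this hEp.le
        _ = K * (e k - e (k+1)) := by rw [hKdef]; ring
    set r : ℝ := 1 - 1/K with hrdef
    have hrlt1 : r < 1 := by
      have : 0 < 1/K := by positivity
      rw [hrdef]; linarith
    have hrstep : ∀ k ≥ k₀, e (k+1) ≤ r * e k := by
      intro k hk
      have h1 := hstep k hk
      have h2 : e k / K ≤ e k - e (k+1) := by
        rw [div_le_iff₀ hKpos]
        linarith [h1, mul_comm K (e k - e (k+1))]
      rw [hrdef]
      have h3 : (1 - 1/K) * e k = e k - e k / K := by ring
      linarith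
    have hr0 : 0 < r := by
      have h1 := hrstep k₀ le_rfl
      have h2 := hpos (k₀+1) (by omega)
      nlinarith [hpos k₀ le_rfl]
    have hgeo : ∀ k ≥ k₀, e k ≤ e k₀ * r ^ (k - k₀) := by
      intro k hk
      induction k, hk using Nat.le_induction with
      | base => simp
      | succ n hn ih =>
        have h1 := hrstep n hn
        have hrw2 : n + 1 - k₀ = (n - k₀) + 1 := by omega
        rw [hrw2, pow_succ]
        calc e (n+1) ≤ r * e n := h1
          _ ≤ r * (e k₀ * r^(n-k₀)) := mul_le_mul_of_nonneg_left ih hr0.le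
          _ = e k₀ * (r^(n-k₀) * r) := by ring
    -- step-size bound
    have hstep2 : ∀ k ≥ k₀, ‖x (k+1) - x k‖^2 ≤ (4/ρ + 2/α) * e k := by
      intro k hk
      have hxd : x (k+1) - x k = (1 + lam k) • d k := by
        rw [hnext k]
        show y k + lam k • (y k - x k) - x k = (1 + lam k) • (y k - x k)
        module
      have hnorm : ‖x (k+1) - x k‖ = (1 + lam k) * ‖d k‖ := by
        rw [hxd, norm_smul, Real.norm_eq_abs, abs_of_nonneg (by linarith [hlam k])]
      have hkey' := hkey k
      have hlow : φ xs ≤ φ (x (k+1)) := hlb (k+1)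
      have heq : e k = φ (x k) - φ xs := rfl
      have hA : ρ/2 * ‖d k‖^2 + α * lam k^2 * ‖d k‖^2 ≤ e k := by
        rw [heq]; linarith
      rw [hnorm]
      have hd0 : (0:ℝ) ≤ ‖d k‖^2 := sq_nonneg _
      have hl0 := hlam k
      have hρ' : (0:ℝ) < 2/ρ := by positivity
      have hα' : (0:ℝ) < 1/α := by positivity
      have hA1 : ρ/2 * ‖d k‖^2 ≤ e k := by nlinarith [mul_nonneg (mul_nonneg hα.le (sq_nonneg (lam k))) hd0]
      have hB1 : α * (lam k^2 * ‖d k‖^2) ≤ e k := by nlinarith [mul_nonneg hρ.le hd0]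
      have hA' : ‖d k‖^2 ≤ 2/ρ * e k := by
        have := mul_le_mul_of_nonneg_left hA1 hρ'.le
        have heq2 : 2/ρ * (ρ/2 * ‖d k‖^2) = ‖d k‖^2 := by field_simp
        linarith
      have hB' : lam k^2 * ‖d k‖^2 ≤ 1/α * e k := by
        have := mul_le_mul_of_nonneg_left hB1 hα'.le
        have heq2 : 1/α * (α * (lam k^2 * ‖d k‖^2)) = lam k^2 * ‖d k‖^2 := by field_simp
        linarith
      have hkey2 : (1 + lam k)^2 * ‖d k‖^2 ≤ 2*‖d k‖^2 + 2*(lam k^2 * ‖d k‖^2) := by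
        nlinarith [mul_nonneg (sq_nonneg (1 - lam k)) hd0]
      calc ((1 + lam k) * ‖d k‖)^2 = (1 + lam k)^2 * ‖d k‖^2 := by ring
        _ ≤ 2*‖d k‖^2 + 2*(lam k^2 * ‖d k‖^2) := hkey2
        _ ≤ 2*(2/ρ * e k) + 2*(1/α * e k) := by linarith
        _ = (4/ρ + 2/α) * e k := by ring
    set s : ℝ := Real.sqrt r with hsdef
    have hs0 : 0 < s := Real.sqrt_pos.mpr hr0
    have hs1 : s < 1 := by
      rw [hsdef]
      rw [show (1:ℝ) = Real.sqrt 1 from Real.sqrt_one.symm]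
      exact Real.sqrt_lt_sqrt hr0.le hrlt1
    have hsr : s^2 = r := Real.sq_sqrt hr0.le
    set A : ℝ := Real.sqrt ((4/ρ + 2/α) * e k₀) with hAdef
    have hApos : 0 < A := Real.sqrt_pos.mpr (by positivity)
    have hA2 : A^2 = (4/ρ + 2/α) * e k₀ := Real.sq_sqrt (by positivity)
    have hAstep : ∀ k ≥ k₀, ‖x (k+1) - x k‖ ≤ A * s ^ (k - k₀) := by
      intro k hk
      have h1 : ‖x (k+1) - x k‖^2 ≤ (4/ρ + 2/α) * (e k₀ * r^(k-k₀)) := by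
        refine le_trans (hstep2 k hk) ?_
        exact mul_le_mul_of_nonneg_left (hgeo k hk) (by positivity)
      have h2 : ‖x (k+1) - x k‖^2 ≤ (A * s^(k-k₀))^2 := by
        calc ‖x (k+1) - x k‖^2 ≤ (4/ρ + 2/α) * (e k₀ * r^(k-k₀)) := h1
          _ = (A * s^(k-k₀))^2 := by
              rw [mul_pow, ← pow_mul, mul_comm (k-k₀) 2, pow_mul, hsr, hA2]; ring
      calc ‖x (k+1) - x k‖ = Real.sqrt (‖x (k+1) - x k‖^2) :=
            (Real.sqrt_sq (norm_nonneg _)).symm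
        _ ≤ Real.sqrt ((A * s^(k-k₀))^2) := Real.sqrt_le_sqrt h2
        _ = A * s^(k-k₀) := Real.sqrt_sq (by positivity)
    have h1s : (0:ℝ) < 1 - s := by linarith
    have hsum : ∀ k ≥ k₀, ∀ n ≥ k,
        ‖x n - x k‖ ≤ A * s^(k-k₀) / (1-s) * (1 - s^(n-k)) := by
      intro k hk n hn
      induction n, hn using Nat.le_induction with
      | base => simp
      | succ n hn ih =>
        have h1 := hAstep n (le_trans hk hn)
        have htri : ‖x (n+1) - x k‖ ≤ ‖x (n+1) - x n‖ + ‖x n - x k‖ := by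
          have := dist_triangle (x (n+1)) (x n) (x k)
          simpa [dist_eq_norm] using this
        have hexp : s^(k-k₀) * s^(n-k) = s^(n-k₀) := by
          rw [← pow_add]; congr 1; omega
        have hexp2 : n + 1 - k = (n-k) + 1 := by omega
        rw [hexp2, pow_succ]
        have hkey2 : A * s^(n-k₀) + A * s^(k-k₀) / (1-s) * (1 - s^(n-k))
            = A * s^(k-k₀) / (1-s) * (1 - s^(n-k) * s) := by
          rw [← hexp]
          field_simp
          ring
        linarith
    have hlim : ∀ k ≥ k₀, ‖x k - xs‖ ≤ A * s^(k-k₀) / (1-s) := by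
      intro k hk
      have htt : Tendsto (fun n => ‖x n - x k‖) atTop (𝓝 ‖xs - x k‖) :=
        ((hconv.sub_const (x k)).norm)
      rw [norm_sub_rev]
      refine le_of_tendsto htt ?_
      filter_upwards [eventually_ge_atTop k] with n hn
      have h1 := hsum k hk n hn
      have hsn : 0 ≤ s^(n-k) := by positivity
      have hBnn : 0 ≤ A * s^(k-k₀) / (1-s) := by positivity
      nlinarith
    have htail : ∀ k ≥ k₀, ‖x k - xs‖ ≤ (A/((1-s) * s^k₀)) * s^k := by
      intro k hk
      have h1 := hlim k hk
      have hsk : s^(k-k₀) * s^k₀ = s^k := by rw [← pow_add]; congr 1; omega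
      have h2 : (A/((1-s) * s^k₀)) * s^k = A * s^(k-k₀) / (1-s) := by
        rw [← hsk]
        field_simp
      linarith
    have hcpos : 0 < A/((1-s) * s^k₀) := by positivity
    obtain ⟨c', hc', hall⟩ := extend_tail (fun k => ‖x k - xs‖) (fun k => norm_nonneg _)
      s ⟨hs0, hs1⟩ k₀ _ hcpos htail
    exact ⟨c', hc', s, ⟨hs0, hs1⟩, hall⟩
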